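/- arXiv:1004.1253 — 8 statements merged into one kernel-verified Lean document; each statement's English description precedes it below -/
import Mathlib

section
/- Let A be an m×n real matrix with all entries bounded in absolute value by 1, and let ε > 0. Then there exist at most 1/ε² cut matrices (matrices that are constant on some rectangle S×T, with S a set of rows and T a set of columns, and zero elsewhere) whose sum B satisfies ‖A−B‖_□ ≤ ε·m·n, where ‖M‖_□ = max over subsets S of rows and T of columns of |∑_{i∈S, j∈T} M_{ij}|. -/
lemma cut_sum_eval {m n : ℕ} (f : Fin m → Fin n → ℝ) (S' : Finset (Fin m))
    (T' : Finset (Fin n)) :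
    ∑ i : Fin m, ∑ j : Fin n, (if i ∈ S' ∧ j ∈ T' then f i j else 0)
      = ∑ i ∈ S', ∑ j ∈ T', f i j := by
  have h : ∀ i : Fin m, ∑ j : Fin n, (if i ∈ S' ∧ j ∈ T' then f i j else 0)
      = if i ∈ S' then ∑ j ∈ T', f i j else 0 := by
    intro i
    by_cases hi : i ∈ S' <;> simp [hi, Finset.sum_ite_mem]
  simp_rw [h]
  simp [Finset.sum_ite_mem]

lemma cut_energy_identity {m n : ℕ} (B : Fin m → Fin n → ℝ) (S' : Finset (Fin m))
    (T' : Finset (Fin n)) (hS : (S'.card : ℝ) ≠ 0) (hT : (T'.card : ℝ) ≠ 0) :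
    ∑ i : Fin m, ∑ j : Fin n, (B i j - if i ∈ S' ∧ j ∈ T' then
        (∑ i ∈ S', ∑ j ∈ T', B i j) / (S'.card * T'.card) else 0) ^ 2
      = ∑ i : Fin m, ∑ j : Fin n, B i j ^ 2
        - (∑ i ∈ S', ∑ j ∈ T', B i j) ^ 2 / (S'.card * T'.card) := by
  set σ : ℝ := ∑ i ∈ S', ∑ j ∈ T', B i j with hσ
  set d : ℝ := σ / (S'.card * T'.card) with hd
  have h1 : ∀ i j, (B i j - if i ∈ S' ∧ j ∈ T' then d else 0) ^ 2
      = B i j ^ 2 - 2 * (if i ∈ S' ∧ j ∈ T' then B i j * d else 0)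
        + (if i ∈ S' ∧ j ∈ T' then d ^ 2 else 0) := by
    intro i j; by_cases h : i ∈ S' ∧ j ∈ T' <;> simp [h] <;> ring
  simp_rw [h1, Finset.sum_add_distrib, Finset.sum_sub_distrib, ← Finset.mul_sum]
  rw [cut_sum_eval (fun i j => B i j * d), cut_sum_eval (fun _ _ => d ^ 2)]
  have h2 : ∑ i ∈ S', ∑ j ∈ T', B i j * d = σ * d := by
    rw [hσ, Finset.sum_mul]
    exact Finset.sum_congr rfl fun i _ => (Finset.sum_mul _ _ _).symm
  have h3 : ∑ _i ∈ S', ∑ _j ∈ T', d ^ 2 = (S'.card * T'.card) * d ^ 2 := by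
    simp [Finset.sum_const, mul_assoc]
  rw [h2, h3, hd]
  field_simp
  ring



/-- **Cut decomposition existence (Frieze–Kannan).** For an `m × n` matrix `A` with entries
bounded by 1 in absolute value and `ε > 0`, there are at most `1/ε²` cut matrices
(each constant `d t` on a rectangle `S t × T t` and zero elsewhere) whose sum `B`
satisfies `‖A - B‖_□ ≤ ε m n`. -/
theorem cut_decomposition_exists (m n : ℕ) (A : Matrix (Fin m) (Fin n) ℝ)
    (hA : ∀ i j, |A i j| ≤ 1) (ε : ℝ) (hε : 0 < ε) :
    ∃ (r : ℕ) (S : Fin r → Finset (Fin m)) (T : Fin r → Finset (Fin n)) (d : Fin r → ℝ),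
      (r : ℝ) ≤ 1 / ε ^ 2 ∧
      ∀ (S' : Finset (Fin m)) (T' : Finset (Fin n)),
        |∑ i ∈ S', ∑ j ∈ T',
            (A i j - ∑ t, if i ∈ S t ∧ j ∈ T t then d t else 0)| ≤ ε * m * n := by

  by_cases hmn : (m : ℝ) * n = 0
  · refine ⟨0, ![], ![], ![], by norm_num; positivity, ?_⟩
    intro S' T'
    have hz : ∑ i ∈ S', ∑ j ∈ T',
        (A i j - ∑ t : Fin 0, if i ∈ (![] : Fin 0 → Finset (Fin m)) t ∧
            j ∈ (![] : Fin 0 → Finset (Fin n)) t then (![] : Fin 0 → ℝ) t else 0) = 0 := by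
      rcases mul_eq_zero.mp hmn with h | h
      · have hm : m = 0 := by exact_mod_cast h
        subst hm
        simp [Finset.eq_empty_of_isEmpty S']
      · have hn : n = 0 := by exact_mod_cast h
        subst hn
        simp [Finset.eq_empty_of_isEmpty T']
    rw [hz]
    rcases mul_eq_zero.mp hmn with h | h <;> simp [h]
  · have hmn' : 0 < (m : ℝ) * n := lt_of_le_of_ne (by positivity) (Ne.symm hmn)
    have key : ∀ k : ℕ,
        (∃ (r : ℕ) (S : Fin r → Finset (Fin m)) (T : Fin r → Finset (Fin n)) (d : Fin r → ℝ),
          (r : ℝ) ≤ 1 / ε ^ 2 ∧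
          ∀ (S' : Finset (Fin m)) (T' : Finset (Fin n)),
            |∑ i ∈ S', ∑ j ∈ T',
                (A i j - ∑ t, if i ∈ S t ∧ j ∈ T t then d t else 0)| ≤ ε * m * n)
        ∨ (∃ (S : Fin k → Finset (Fin m)) (T : Fin k → Finset (Fin n)) (d : Fin k → ℝ),
          ∑ i : Fin m, ∑ j : Fin n,
              (A i j - ∑ t, if i ∈ S t ∧ j ∈ T t then d t else 0) ^ 2
            ≤ (m : ℝ) * n - k * (ε ^ 2 * ((m : ℝ) * n))) := by
      intro k
      induction k with
      | zero =>
        right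
        refine ⟨![], ![], ![], ?_⟩
        simp only [Finset.univ_eq_empty, Finset.sum_empty, Nat.cast_zero, zero_mul, sub_zero]
        have hsq : ∀ i j, A i j ^ 2 ≤ 1 := by
          intro i j
          nlinarith [hA i j, abs_nonneg (A i j), sq_abs (A i j)]
        calc ∑ i : Fin m, ∑ j : Fin n, A i j ^ 2
            ≤ ∑ i : Fin m, ∑ j : Fin n, (1 : ℝ) :=
              Finset.sum_le_sum fun i _ => Finset.sum_le_sum fun j _ => hsq i j
          _ = (m : ℝ) * n := by simp [mul_comm]
      | succ k ih =>
        rcases ih with h | ⟨S, T, d, hE⟩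
        · exact Or.inl h
        set B : Fin m → Fin n → ℝ :=
          fun i j => A i j - ∑ t, if i ∈ S t ∧ j ∈ T t then d t else 0 with hB
        by_cases hgood : ∀ (S' : Finset (Fin m)) (T' : Finset (Fin n)),
            |∑ i ∈ S', ∑ j ∈ T', B i j| ≤ ε * m * n
        · left
          refine ⟨k, S, T, d, ?_, hgood⟩
          have h0 : (0 : ℝ) ≤ ∑ i : Fin m, ∑ j : Fin n, B i j ^ 2 := by positivity
          have h1 : (k : ℝ) * ε ^ 2 * ((m : ℝ) * n) ≤ 1 * ((m : ℝ) * n) := by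
            nlinarith [hE, h0]
          have hε2 : (0 : ℝ) < ε ^ 2 := by positivity
          rw [le_div_iff₀ hε2]
          exact le_of_mul_le_mul_right h1 hmn'
        · right
          push_neg at hgood
          obtain ⟨S', T', hbig⟩ := hgood
          set σ : ℝ := ∑ i ∈ S', ∑ j ∈ T', B i j with hσdef
          have hεmn : 0 < ε * m * n := by nlinarith [hmn']
          have hσpos : 0 < |σ| := lt_trans hεmn hbig
          have hScard : (S'.card : ℝ) ≠ 0 := by
            intro h
            have : S' = ∅ := Finset.card_eq_zero.mp (by exact_mod_cast h)
            rw [hσdef, this] at hσpos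
            simp at hσpos
          have hTcard : (T'.card : ℝ) ≠ 0 := by
            intro h
            have : T' = ∅ := Finset.card_eq_zero.mp (by exact_mod_cast h)
            rw [hσdef, this] at hσpos
            simp at hσpos
          set dnew : ℝ := σ / (S'.card * T'.card) with hdnew
          refine ⟨(Fin.snoc S S' : Fin (k+1) → Finset (Fin m)),
            (Fin.snoc T T' : Fin (k+1) → Finset (Fin n)),
            (Fin.snoc d dnew : Fin (k+1) → ℝ), ?_⟩
          have hres : ∀ i j,
              A i j - ∑ t : Fin (k+1),
                  (if i ∈ (Fin.snoc S S' : Fin (k+1) → Finset (Fin m)) t ∧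
                      j ∈ (Fin.snoc T T' : Fin (k+1) → Finset (Fin n)) t
                    then (Fin.snoc d dnew : Fin (k+1) → ℝ) t else 0)
              = B i j - (if i ∈ S' ∧ j ∈ T' then dnew else 0) := by
            intro i j
            rw [Fin.sum_univ_castSucc]
            simp only [Fin.snoc_castSucc, Fin.snoc_last, hB]
            ring
          simp_rw [hres]
          rw [hdnew, hσdef, cut_energy_identity B S' T' hScard hTcard, ← hσdef]
          have hst : (0 : ℝ) < (S'.card : ℝ) * T'.card := by
            rcases Nat.eq_zero_or_pos S'.card with h | h
            · exact absurd (by exact_mod_cast h) hScard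
            rcases Nat.eq_zero_or_pos T'.card with h' | h'
            · exact absurd (by exact_mod_cast h') hTcard
            have : (0:ℝ) < S'.card := by exact_mod_cast h
            have : (0:ℝ) < T'.card := by exact_mod_cast h'
            positivity
          have hstle : (S'.card : ℝ) * T'.card ≤ (m : ℝ) * n := by
            have h1 : (S'.card : ℝ) ≤ m := by
              exact_mod_cast (Finset.card_le_card (Finset.subset_univ S')).trans
                (le_of_eq (by simp))
            have h2 : (T'.card : ℝ) ≤ n := by
              exact_mod_cast (Finset.card_le_card (Finset.subset_univ T')).trans
                (le_of_eq (by simp))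
            have hS0 : (0:ℝ) ≤ S'.card := Nat.cast_nonneg _
            have hT0 : (0:ℝ) ≤ T'.card := Nat.cast_nonneg _
            nlinarith
          have hdrop : ε ^ 2 * ((m:ℝ) * n) ≤ σ ^ 2 / ((S'.card : ℝ) * T'.card) := by
            have hσ2 : (ε * m * n) ^ 2 < σ ^ 2 := by
              have h := pow_lt_pow_left₀ hbig (le_of_lt hεmn) two_ne_zero
              rwa [sq_abs] at h
            have h1 : σ ^ 2 / ((m:ℝ)*n) ≤ σ ^ 2 / ((S'.card:ℝ) * T'.card) :=
              div_le_div_of_nonneg_left (by positivity) hst hstle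
            have h2 : ε ^ 2 * ((m:ℝ)*n) ≤ σ ^ 2 / ((m:ℝ)*n) := by
              rw [le_div_iff₀ hmn']
              nlinarith [hσ2]
            linarith
          push_cast
          linarith
    rcases key (⌈1 / ε ^ 2⌉₊ + 1) with h | ⟨S, T, d, hE⟩
    · exact h
    · exfalso
      have h0 : (0 : ℝ) ≤ ∑ i : Fin m, ∑ j : Fin n,
          (A i j - ∑ t, if i ∈ S t ∧ j ∈ T t then d t else 0) ^ 2 := by positivity
      have hk : (1 : ℝ) / ε ^ 2 < ((⌈1 / ε ^ 2⌉₊ + 1 : ℕ) : ℝ) := by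
        push_cast
        calc (1:ℝ)/ε^2 ≤ ⌈1/ε^2⌉₊ := Nat.le_ceil _
          _ < ⌈1/ε^2⌉₊ + 1 := by linarith
      have hlt : (1 : ℝ) * ((m:ℝ)*n) < ((⌈1 / ε ^ 2⌉₊ + 1 : ℕ) : ℝ) * (ε^2 * ((m:ℝ)*n)) := by
        have hε2 : (0:ℝ) < ε ^ 2 := by positivity
        have h2 := (div_lt_iff₀ hε2).mp hk
        nlinarith
      linarith
end

section
/- Let A be an m×n real matrix, S ⊆ {1,...,m}, T ⊆ {1,...,n} nonempty, and let d = A(S,T)/(|S|·|T|) where A(S,T) = ∑_{i∈S,j∈T} A_{ij}. Let B be the matrix equal to d on S×T and 0 elsewhere. Then ‖A−B‖_F² = ‖A‖_F² − A(S,T)²/(|S|·|T|). In particular, if |A(S,T)| ≥ ε·m·n, then ‖A−B‖_F² ≤ ‖A‖_F² − ε²·m·n. -/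
/-- Subtracting the average of `A` on a rectangle `S × T` decreases the squared Frobenius
norm by exactly `A(S,T)²/(|S||T|)`; in particular if `|A(S,T)| ≥ ε m n` (with `ε ≥ 0`),
it decreases by at least `ε² m n`. -/
theorem frobenius_drop_of_average_subtraction (m n : ℕ) (A : Matrix (Fin m) (Fin n) ℝ)
    (S : Finset (Fin m)) (T : Finset (Fin n)) (hS : S.Nonempty) (hT : T.Nonempty)
    (d : ℝ) (hd : d = (∑ i ∈ S, ∑ j ∈ T, A i j) / ((S.card : ℝ) * T.card))
    (B : Matrix (Fin m) (Fin n) ℝ)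
    (hB : ∀ i j, B i j = if i ∈ S ∧ j ∈ T then d else 0)
    (ε : ℝ) (hε : 0 ≤ ε) :
    (∑ i, ∑ j, (A i j - B i j) ^ 2)
      = (∑ i, ∑ j, A i j ^ 2)
        - (∑ i ∈ S, ∑ j ∈ T, A i j) ^ 2 / ((S.card : ℝ) * T.card) ∧
    (ε * m * n ≤ |∑ i ∈ S, ∑ j ∈ T, A i j| →
      (∑ i, ∑ j, (A i j - B i j) ^ 2) ≤ (∑ i, ∑ j, A i j ^ 2) - ε ^ 2 * m * n) := by
  set P : ℝ := ∑ i ∈ S, ∑ j ∈ T, A i j with hP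
  have hSc : (0 : ℝ) < S.card := by exact_mod_cast Finset.card_pos.mpr hS
  have hTc : (0 : ℝ) < T.card := by exact_mod_cast Finset.card_pos.mpr hT
  have hc : (0 : ℝ) < (S.card : ℝ) * T.card := mul_pos hSc hTc
  have key : (∑ i, ∑ j, (A i j - B i j) ^ 2)
      = (∑ i, ∑ j, A i j ^ 2) - P ^ 2 / ((S.card : ℝ) * T.card) := by
    have h1 : ∀ i j, (A i j - B i j) ^ 2
        = A i j ^ 2 - (if i ∈ S ∧ j ∈ T then 2 * A i j * d - d ^ 2 else 0) := by
      intro i j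
      rw [hB]
      by_cases h : i ∈ S ∧ j ∈ T <;> simp [h] <;> ring
    simp only [h1, Finset.sum_sub_distrib]
    congr 1
    have h2 : (∑ i, ∑ j, (if i ∈ S ∧ j ∈ T then 2 * A i j * d - d ^ 2 else 0))
        = ∑ i ∈ S, ∑ j ∈ T, (2 * A i j * d - d ^ 2) := by
      rw [Finset.sum_comm]
      rw [show (∑ i ∈ S, ∑ j ∈ T, (2 * A i j * d - d ^ 2))
        = ∑ j ∈ T, ∑ i ∈ S, (2 * A i j * d - d ^ 2) from Finset.sum_comm ..]
      rw [← Finset.sum_subset (Finset.subset_univ T)]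
      · refine Finset.sum_congr rfl fun j hj => ?_
        rw [← Finset.sum_subset (Finset.subset_univ S)]
        · refine Finset.sum_congr rfl fun i hi => ?_
          simp [hi, hj]
        · intro i _ hi
          simp [hi]
      · intro j _ hj
        apply Finset.sum_eq_zero
        intro i _
        simp [hj]
    rw [h2]
    have h3 : (∑ i ∈ S, ∑ j ∈ T, (2 * A i j * d - d ^ 2))
        = 2 * d * P - ((S.card : ℝ) * T.card) * d ^ 2 := by
      simp only [Finset.sum_sub_distrib, Finset.sum_const, nsmul_eq_mul, hP, Finset.mul_sum]
      congr 1
      · exact Finset.sum_congr rfl fun i _ => Finset.sum_congr rfl fun j _ => by ring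
      · push_cast; ring
    rw [h3, hd]
    field_simp
    ring
  refine ⟨key, fun hle => ?_⟩
  rw [key]
  have hm : (0:ℝ) < m := by
    exact_mod_cast hS.choose.pos
  have hn : (0:ℝ) < n := by
    exact_mod_cast hT.choose.pos
  have hmn : (0:ℝ) < (m:ℝ) * n := mul_pos hm hn
  have h1 : ε ^ 2 * ((m:ℝ) * n) ^ 2 ≤ P ^ 2 := by
    have := mul_self_le_mul_self (by positivity : (0:ℝ) ≤ ε * m * n) hle
    calc ε ^ 2 * ((m:ℝ) * n) ^ 2 = (ε * m * n) * (ε * m * n) := by ring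
      _ ≤ |P| * |P| := this
      _ = P ^ 2 := by rw [← abs_mul, abs_mul_self]; ring
  have hcle : (S.card : ℝ) * T.card ≤ (m:ℝ) * n := by
    have h1 : (S.card : ℝ) ≤ m := by
      exact_mod_cast (Finset.card_le_card (Finset.subset_univ S)).trans_eq (by simp)
    have h2 : (T.card : ℝ) ≤ n := by
      exact_mod_cast (Finset.card_le_card (Finset.subset_univ T)).trans_eq (by simp)
    exact mul_le_mul h1 h2 hTc.le hm.le
  have : ε ^ 2 * m * n ≤ P ^ 2 / ((S.card : ℝ) * T.card) := by
    rw [le_div_iff₀ hc]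
    calc ε ^ 2 * (m:ℝ) * n * ((S.card : ℝ) * T.card)
        ≤ ε ^ 2 * (m:ℝ) * n * ((m:ℝ) * n) := by
          apply mul_le_mul_of_nonneg_left hcle; positivity
      _ = ε ^ 2 * ((m:ℝ) * n) ^ 2 := by ring
      _ ≤ P ^ 2 := h1
  linarith
end

section
/- Let A be an order-3 real tensor with dimensions n₁×n₂×n₃, all entries at most 1 in absolute value, and ε > 0. Then there exist at most 1/ε² cut tensors (tensors constant on some combinatorial box S₁×S₂×S₃ and zero elsewhere) whose sum B satisfies ‖A−B‖_□ ≤ ε·n₁·n₂·n₃, where ‖M‖_□ is the maximum over boxes S₁×S₂×S₃ of |∑_{(i,j,k)∈S₁×S₂×S₃} M_{ijk}|. -/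
/-!
Energy increment (Frieze–Kannan). Measure `f` by its energy `∑ f²`, at most `N = n₁ n₂ n₃`
when `|f| ≤ 1`. If some box `T` has `|∑_T f| > εN`, subtracting the mean of `f` on `T` there
lowers the energy by `(∑_T f)² / #T ≥ (εN)² / N = ε² N`. Iterating, the process stops after at
most `N / (ε² N) = 1 / ε²` cuts, and it only stops when every box sum is at most `εN`.
The argument never uses that the test sets are boxes: it works for any family of subsets of a
finite set.
-/

open Finset

section CutApproximation

variable {α : Type*} [Fintype α] [DecidableEq α]

theorem sum_sq_sub_ite_mem (f : α → ℝ) (T : Finset α) (c : ℝ) :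
    ∑ x, (f x - if x ∈ T then c else 0) ^ 2
      = ∑ x, f x ^ 2 - (2 * c * ∑ x ∈ T, f x - c ^ 2 * #T) := by
  have hpt : ∀ x, (f x - if x ∈ T then c else 0) ^ 2
      = f x ^ 2 - if x ∈ T then 2 * c * f x - c ^ 2 else 0 := by
    intro x; split_ifs <;> ring
  simp only [hpt, sum_sub_distrib, sum_ite_mem, univ_inter, ← mul_sum, sum_const, nsmul_eq_mul]
  ring

theorem card_mul_sum_sq_sub_mean_add_sq_le (f : α → ℝ) (T : Finset α) :
    Fintype.card α * ∑ x, (f x - if x ∈ T then (∑ y ∈ T, f y) / #T else 0) ^ 2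
      + (∑ x ∈ T, f x) ^ 2 ≤ Fintype.card α * ∑ x, f x ^ 2 := by
  rcases T.eq_empty_or_nonempty with rfl | hT
  · simp
  have hT : (0 : ℝ) < #T := by exact_mod_cast hT.card_pos
  have hTα : (#T : ℝ) ≤ Fintype.card α := by exact_mod_cast T.card_le_univ
  set σ := ∑ x ∈ T, f x
  have hdrop : σ ^ 2 ≤ Fintype.card α * (σ ^ 2 / #T) := by
    rw [mul_div_assoc', le_div_iff₀ hT]
    exact mul_le_mul_of_nonneg_left hTα (sq_nonneg σ) |>.trans_eq (mul_comm _ _)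
  rw [sum_sq_sub_ite_mem]
  field_simp
  nlinarith

theorem exists_cut_decomposition {β : Type*} (B : β → Finset α) {η : ℝ} (hη : 0 < η)
    (f : α → ℝ) :
    ∃ (r : ℕ) (b : Fin r → β) (d : Fin r → ℝ),
      r * η ^ 2 ≤ Fintype.card α * ∑ x, f x ^ 2 ∧
      ∀ T, |∑ x ∈ B T, (f x - ∑ t, if x ∈ B (b t) then d t else 0)| ≤ η := by
  obtain ⟨s, hs⟩ : ∃ s : ℕ, Fintype.card α * ∑ x, f x ^ 2 < s * η ^ 2 :=
    ⟨⌊(Fintype.card α * ∑ x, f x ^ 2) / η ^ 2⌋₊ + 1, by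
      rw [← div_lt_iff₀ (by positivity)]; exact_mod_cast Nat.lt_floor_add_one _⟩
  induction s generalizing f with
  | zero =>
    have : 0 ≤ Fintype.card α * ∑ x, f x ^ 2 := by positivity
    rw [Nat.cast_zero, zero_mul] at hs
    linarith
  | succ s ih =>
    by_cases hgood : ∀ T, |∑ x ∈ B T, f x| ≤ η
    · exact ⟨0, Fin.elim0, Fin.elim0, by rw [Nat.cast_zero, zero_mul]; positivity,
        by simpa using hgood⟩
    push Not at hgood
    obtain ⟨T, hT⟩ := hgood
    set c := (∑ y ∈ B T, f y) / #(B T)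
    set g := fun x => f x - if x ∈ B T then c else 0 with hg
    have hdrop := card_mul_sum_sq_sub_mean_add_sq_le f (B T)
    have hηT : η ^ 2 < (∑ x ∈ B T, f x) ^ 2 := by
      simpa only [sq_abs] using pow_lt_pow_left₀ hT hη.le two_ne_zero
    obtain ⟨r, b, d, hr, happrox⟩ := ih g (by push_cast at hs; linarith)
    refine ⟨r + 1, Fin.cons T b, Fin.cons c d, by push_cast; linarith, fun T' => ?_⟩
    simpa only [Fin.sum_univ_succ, Fin.cons_zero, Fin.cons_succ, hg, sub_add_eq_sub_sub]
      using happrox T'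

end CutApproximation

/-- **Cut decomposition for 3-tensors.** For an order-3 tensor `A` with entries bounded by 1
in absolute value and `ε > 0`, there are at most `1/ε²` cut tensors (each constant `d t` on a
box `S₁ t × S₂ t × S₃ t` and zero elsewhere) whose sum `B` satisfies
`‖A - B‖_□ ≤ ε n₁ n₂ n₃`. -/
theorem cut_decomposition_exists_tensor (n₁ n₂ n₃ : ℕ)
    (A : Fin n₁ → Fin n₂ → Fin n₃ → ℝ)
    (hA : ∀ i j k, |A i j k| ≤ 1) (ε : ℝ) (hε : 0 < ε) :
    ∃ (r : ℕ) (S₁ : Fin r → Finset (Fin n₁)) (S₂ : Fin r → Finset (Fin n₂))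
      (S₃ : Fin r → Finset (Fin n₃)) (d : Fin r → ℝ),
      (r : ℝ) ≤ 1 / ε ^ 2 ∧
      ∀ (T₁ : Finset (Fin n₁)) (T₂ : Finset (Fin n₂)) (T₃ : Finset (Fin n₃)),
        |∑ i ∈ T₁, ∑ j ∈ T₂, ∑ k ∈ T₃,
            (A i j k - ∑ t, if i ∈ S₁ t ∧ j ∈ S₂ t ∧ k ∈ S₃ t then d t else 0)|
          ≤ ε * n₁ * n₂ * n₃ := by
  set N : ℝ := n₁ * n₂ * n₃
  have hcard : (Fintype.card (Fin n₁ × Fin n₂ × Fin n₃) : ℝ) = N := by simp [N, mul_assoc]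
  let a : Fin n₁ × Fin n₂ × Fin n₃ → ℝ := fun x => A x.1 x.2.1 x.2.2
  rcases (by positivity : (0 : ℝ) ≤ N).eq_or_lt with hN0 | hN0
  · have : IsEmpty (Fin n₁ × Fin n₂ × Fin n₃) := by
      rw [← Fintype.card_eq_zero_iff]; exact_mod_cast hcard.trans hN0.symm
    refine ⟨0, Fin.elim0, Fin.elim0, Fin.elim0, Fin.elim0, by rw [Nat.cast_zero]; positivity,
      fun T₁ T₂ T₃ => ?_⟩
    simp only [← sum_product']
    rw [sum_of_isEmpty, abs_zero]
    positivity
  have hsum_sq : ∑ x, a x ^ 2 ≤ N := by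
    simpa [← hcard] using sum_le_card_nsmul univ (fun x => a x ^ 2) 1 fun x _ => by
      simpa [sq_abs] using pow_le_one₀ (abs_nonneg _) (hA x.1 x.2.1 x.2.2) (n := 2)
  obtain ⟨r, b, d, hr, happrox⟩ := exists_cut_decomposition
    (fun T : Finset (Fin n₁) × Finset (Fin n₂) × Finset (Fin n₃) => T.1 ×ˢ T.2.1 ×ˢ T.2.2)
    (η := ε * N) (by positivity) a
  rw [hcard] at hr
  refine ⟨r, fun t => (b t).1, fun t => (b t).2.1, fun t => (b t).2.2, d, ?_, fun T₁ T₂ T₃ => ?_⟩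
  · have hrN : r * ε ^ 2 * N ^ 2 ≤ 1 * N ^ 2 := by
      nlinarith [mul_le_mul_of_nonneg_left hsum_sq hN0.le]
    rw [le_div_iff₀ (by positivity)]
    exact le_of_mul_le_mul_right hrN (by positivity)
  · simpa only [sum_product, mem_product, N, mul_assoc] using happrox (T₁, T₂, T₃)
end

section
/- Let A be an m×n real matrix and ε > 0. Then there exists a matrix B of rank at most 1/ε² such that ‖A−B‖₂ ≤ ε·‖A‖_F, where ‖·‖₂ is the spectral (operator) norm and ‖·‖_F is the Frobenius norm. -/
/-- Euclidean norm of a vector. -/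
noncomputable def enorm' {n : ℕ} (v : Fin n → ℝ) : ℝ := Real.sqrt (∑ i, v i ^ 2)

/-- Frobenius norm of a matrix. -/
noncomputable def frob {m n : ℕ} (M : Matrix (Fin m) (Fin n) ℝ) : ℝ :=
  Real.sqrt (∑ i, ∑ j, M i j ^ 2)

/-- Spectral (operator) norm of a matrix: the supremum of `‖Mx‖` over unit vectors `x`. -/
noncomputable def specNorm {m n : ℕ} (M : Matrix (Fin m) (Fin n) ℝ) : ℝ :=
  sSup ((fun x : Fin n → ℝ => enorm' (M.mulVec x)) '' {x | enorm' x = 1})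

/-!
Let `v_i` be an orthonormal eigenbasis of `Aᵀ A` with eigenvalues `μ_i ≥ 0`; then
`∑ μ_i = trace (Aᵀ A) = ‖A‖_F²`. Take `B = A P` with `P` the orthogonal projection onto the span
of the `v_i` with `μ_i > ε² ‖A‖_F²`: by Markov's inequality there are at most `1/ε²` of them,
which bounds the rank. For the complementary projection `Q = 1 - P`, the C⋆-identity
`‖A Q‖₂² = ‖Q (Aᵀ A) Q‖₂` and the diagonalisation of `Aᵀ A` give
`‖A - B‖₂² = max_{μ_i ≤ ε² ‖A‖_F²} μ_i ≤ ε² ‖A‖_F²`.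
-/

open Matrix Finset Unitary
open scoped Matrix.Norms.L2Operator

namespace Matrix.IsHermitian

variable {𝕜 : Type*} [RCLike 𝕜] {n : Type*} [Fintype n] [DecidableEq n] {H : Matrix n n 𝕜}

noncomputable def eigenProj (hH : H.IsHermitian) (s : Finset n) : Matrix n n 𝕜 :=
  conjStarAlgAut 𝕜 _ hH.eigenvectorUnitary (diagonal fun i => if i ∈ s then 1 else 0)

lemma eigenProj_add_eigenProj_compl (hH : H.IsHermitian) (s : Finset n) :
    hH.eigenProj s + hH.eigenProj sᶜ = 1 := by
  have hdiag : ((diagonal fun i => if i ∈ s then 1 else 0) +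
      diagonal fun i => if i ∈ sᶜ then 1 else 0 : Matrix n n 𝕜) = 1 := by
    rw [diagonal_add, ← diagonal_one]
    congr 1
    ext i
    by_cases hi : i ∈ s <;> simp [hi]
  rw [eigenProj, eigenProj, ← map_add, hdiag, map_one]

lemma rank_eigenProj_le (hH : H.IsHermitian) (s : Finset n) : (hH.eigenProj s).rank ≤ #s := by
  classical
  calc (hH.eigenProj s).rank ≤ (diagonal fun i => if i ∈ s then (1 : 𝕜) else 0).rank := by
        rw [eigenProj, conjStarAlgAut_apply]
        exact (rank_mul_le_left _ _).trans (rank_mul_le_right _ _)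
    _ = #s := by
        rw [rank_diagonal, Fintype.card_subtype]
        simp

lemma star_eigenProj (hH : H.IsHermitian) (s : Finset n) :
    star (hH.eigenProj s) = hH.eigenProj s := by
  rw [eigenProj, ← map_star, star_eq_conjTranspose, diagonal_conjTranspose]
  congr 3
  ext i
  simp [apply_ite]

lemma eigenProj_mul_mul_eigenProj (hH : H.IsHermitian) (s : Finset n) :
    hH.eigenProj s * H * hH.eigenProj s = conjStarAlgAut 𝕜 _ hH.eigenvectorUnitary
      (diagonal fun i => if i ∈ s then (hH.eigenvalues i : 𝕜) else 0) := by
  calc hH.eigenProj s * H * hH.eigenProj s = hH.eigenProj s *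
        conjStarAlgAut 𝕜 _ hH.eigenvectorUnitary (diagonal (RCLike.ofReal ∘ hH.eigenvalues)) *
        hH.eigenProj s := congrArg (hH.eigenProj s * · * hH.eigenProj s) hH.spectral_theorem
    _ = _ := by
      rw [eigenProj, ← map_mul, ← map_mul, diagonal_mul_diagonal, diagonal_mul_diagonal]
      congr 2
      ext i
      split_ifs <;> simp

lemma l2_opNorm_eigenProj_mul_mul_eigenProj (hH : H.IsHermitian) (s : Finset n) :
    ‖hH.eigenProj s * H * hH.eigenProj s‖ =
      ‖fun i => if i ∈ s then (hH.eigenvalues i : 𝕜) else 0‖ := by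
  rw [eigenProj_mul_mul_eigenProj, conjStarAlgAut_apply, ← Unitary.coe_star,
    CStarRing.norm_mul_coe_unitary, CStarRing.norm_coe_unitary_mul, l2_opNorm_diagonal]

end Matrix.IsHermitian

section
variable {𝕜 : Type*} [RCLike 𝕜] {m n : Type*} [Fintype m] [Fintype n] [DecidableEq n]

lemma Matrix.l2_opNorm_mul_eigenProj_sq (A : Matrix m n 𝕜) (s : Finset n) :
    ‖A * (isHermitian_conjTranspose_mul_self A).eigenProj s‖ ^ 2 =
      ‖fun i => if i ∈ s then ((isHermitian_conjTranspose_mul_self A).eigenvalues i : 𝕜)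
        else 0‖ := by
  set hH := isHermitian_conjTranspose_mul_self A
  rw [sq, ← l2_opNorm_conjTranspose_mul_self, conjTranspose_mul, ← star_eq_conjTranspose,
    hH.star_eigenProj, ← Matrix.mul_assoc, Matrix.mul_assoc (hH.eigenProj s) Aᴴ A,
    hH.l2_opNorm_eigenProj_mul_mul_eigenProj]

lemma Matrix.l2_opNorm_mul_eigenProj_le (A : Matrix m n 𝕜) (s : Finset n) {t : ℝ} (ht : 0 ≤ t)
    (hs : ∀ i ∈ s, (isHermitian_conjTranspose_mul_self A).eigenvalues i ≤ t) :
    ‖A * (isHermitian_conjTranspose_mul_self A).eigenProj s‖ ≤ √t := by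
  refine Real.le_sqrt_of_sq_le ?_
  rw [l2_opNorm_mul_eigenProj_sq]
  refine (pi_norm_le_iff_of_nonneg ht).mpr fun i => ?_
  split_ifs with hi
  · rw [RCLike.norm_ofReal, abs_of_nonneg (eigenvalues_conjTranspose_mul_self_nonneg A i)]
    exact hs i hi
  · simpa using ht

lemma Matrix.sum_eigenvalues_conjTranspose_mul_self (A : Matrix m n ℝ) :
    ∑ i, (isHermitian_conjTranspose_mul_self A).eigenvalues i = ∑ i, ∑ j, A i j ^ 2 := by
  have htrace := (isHermitian_conjTranspose_mul_self A).trace_eq_sum_eigenvalues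
  simp only [RCLike.ofReal_real_eq_id, id] at htrace
  rw [← htrace, trace, Finset.sum_comm]
  simp [mul_apply, sq]

end

lemma Finset.card_filter_mul_sum_lt_mul_le_one {ι K : Type*} [Fintype ι] [Field K] [LinearOrder K]
    [IsStrictOrderedRing K] {f : ι → K} (hf : 0 ≤ f) (c : K) :
    (#{i | c * ∑ j, f j < f i} : K) * c ≤ 1 := by
  set S := ∑ j, f j
  have hS : 0 ≤ S := sum_nonneg fun j _ => hf j
  have hle : ∀ i, f i ≤ S := fun i => single_le_sum (fun j _ => hf j) (mem_univ i)
  have hsum : #{i | c * S < f i} * (c * S) ≤ S := by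
    calc _ ≤ ∑ i with c * S < f i, f i := by
          simpa using card_nsmul_le_sum _ f (c * S) fun i hi => (mem_filter.mp hi).2.le
      _ ≤ S := sum_le_sum_of_subset_of_nonneg (subset_univ _) fun i _ _ => hf i
  rcases hS.eq_or_lt with hS0 | hSpos
  · have hempty : ({i | c * S < f i} : Finset ι) = ∅ :=
      filter_eq_empty_iff.mpr fun i _ => by simpa [← hS0] using hle i
    simp [hempty]
  · nlinarith

lemma enorm'_eq_norm {n : ℕ} (v : Fin n → ℝ) : enorm' v = ‖WithLp.toLp 2 v‖ := by
  simp [enorm', EuclideanSpace.norm_eq]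

lemma specNorm_le_l2_opNorm {m n : ℕ} (M : Matrix (Fin m) (Fin n) ℝ) : specNorm M ≤ ‖M‖ := by
  refine Real.sSup_le ?_ (norm_nonneg M)
  rintro _ ⟨x, hx : enorm' x = 1, rfl⟩
  rw [enorm'_eq_norm] at hx
  simpa [enorm'_eq_norm, hx] using M.l2_opNorm_mulVec (WithLp.toLp 2 x)

/-- **Low-rank approximation in spectral norm.** For any matrix `A` and `ε > 0` there is a
matrix `B` of rank at most `1/ε²` with `‖A - B‖₂ ≤ ε ‖A‖_F`. -/
theorem low_rank_spectral_approx (m n : ℕ) (A : Matrix (Fin m) (Fin n) ℝ)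
    (ε : ℝ) (hε : 0 < ε) :
    ∃ B : Matrix (Fin m) (Fin n) ℝ,
      (B.rank : ℝ) ≤ 1 / ε ^ 2 ∧ specNorm (A - B) ≤ ε * frob A := by
  set hH := isHermitian_conjTranspose_mul_self A
  set t := ε ^ 2 * ∑ j, hH.eigenvalues j
  set s : Finset (Fin n) := {i | t < hH.eigenvalues i}
  refine ⟨A * hH.eigenProj s, ?_, ?_⟩
  · have hrank : (A * hH.eigenProj s).rank ≤ #s :=
      (rank_mul_le_right _ _).trans (hH.rank_eigenProj_le s)
    rw [le_div_iff₀ (by positivity)]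
    calc ((A * hH.eigenProj s).rank : ℝ) * ε ^ 2 ≤ #s * ε ^ 2 := by gcongr
      _ ≤ 1 := card_filter_mul_sum_lt_mul_le_one (eigenvalues_conjTranspose_mul_self_nonneg A) _
  · have hcompl : A - A * hH.eigenProj s = A * hH.eigenProj sᶜ := by
      rw [eq_sub_of_add_eq' (hH.eigenProj_add_eigenProj_compl s), Matrix.mul_sub, Matrix.mul_one]
    have hμ : 0 ≤ ∑ j, hH.eigenvalues j :=
      sum_nonneg fun j _ => eigenvalues_conjTranspose_mul_self_nonneg A j
    have ht : 0 ≤ t := by positivity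
    calc specNorm (A - A * hH.eigenProj s) ≤ ‖A * hH.eigenProj sᶜ‖ :=
          hcompl ▸ specNorm_le_l2_opNorm _
      _ ≤ √t := A.l2_opNorm_mul_eigenProj_le sᶜ ht fun i hi => by simpa [s] using hi
      _ = ε * frob A := by
        rw [Real.sqrt_mul' _ hμ, Real.sqrt_sq hε.le, sum_eigenvalues_conjTranspose_mul_self,
          frob]
end

section
/- With the setup of the randomized matrix multiplication estimator X = (1/s)·∑_{t=1}^s (1/p_{i_t})·A_{i_t} B^{i_t} for estimating AB from s i.i.d. index samples drawn with probabilities p₁,...,p_n > 0, the sum of the variances of all entries of X satisfies Var(X) ≤ (1/s)·∑_{i=1}^n (1/p_i)·‖A_i‖²·‖B^i‖², where ‖A_i‖ is the Euclidean norm of the i-th column of A and ‖B^i‖ the Euclidean norm of the i-th row of B. -/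
/-!
Entrywise, `X j k` is the mean of `s` independent copies of `g i = A j i * B i k / q i`, an
unbiased estimator of `(A * B) j k`. Hence its variance is `(E g² - (E g)²) / s ≤ E g² / s`,
and summing `E g² = ∑ i, A j i ^ 2 * B i k ^ 2 / q i` over `j, k` gives the bound. The variance
of a mean is computed by expanding the square: after centering, the cross terms of distinct
samples factor by independence and vanish.
-/

open Finset

section IidSampling

variable {κ ι R : Type*} [Fintype κ] [DecidableEq κ] [Fintype ι]

/-- Expectation of `F (i_t)_{t : κ}` when the indices `i_t` are drawn independently, each equal
to `i` with probability `q i`. -/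
def iidExpectation [CommSemiring R] (q : ι → R) (F : (κ → ι) → R) : R :=
  ∑ f : κ → ι, (∏ t, q (f t)) * F f

section CommSemiring

variable [CommSemiring R] {q : ι → R}

theorem iidExpectation_sum {α : Type*} (S : Finset α) (F : α → (κ → ι) → R) :
    iidExpectation q (fun f => ∑ a ∈ S, F a f) = ∑ a ∈ S, iidExpectation q (F a) := by
  simp only [iidExpectation, mul_sum]
  exact sum_comm

theorem iidExpectation_const_mul (c : R) (F : (κ → ι) → R) :
    iidExpectation q (fun f => c * F f) = c * iidExpectation q F := by
  simp only [iidExpectation, mul_sum, mul_left_comm]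

theorem iidExpectation_prod (u : κ → ι → R) :
    iidExpectation q (fun f => ∏ t, u t (f t)) = ∏ t, ∑ i, q i * u t i := by
  simp only [iidExpectation, ← prod_mul_distrib]
  exact (Fintype.prod_sum fun t i => q i * u t i).symm

theorem iidExpectation_apply (hq : ∑ i, q i = 1) (t₀ : κ) (v : ι → R) :
    iidExpectation q (fun f => v (f t₀)) = ∑ i, q i * v i := by
  have hv (f : κ → ι) : v (f t₀) = ∏ t, (Pi.mulSingle t₀ v : κ → ι → R) t (f t) := by
    rw [Fintype.prod_eq_single t₀ fun t ht => by simp [ht], Pi.mulSingle_eq_same]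
  simp only [hv, iidExpectation_prod]
  rw [Fintype.prod_eq_single t₀ fun t ht => by simp [ht, hq], Pi.mulSingle_eq_same]

theorem iidExpectation_apply_mul_apply (hq : ∑ i, q i = 1) {t₁ t₂ : κ} (ht : t₁ ≠ t₂)
    (v w : ι → R) :
    iidExpectation q (fun f => v (f t₁) * w (f t₂)) = (∑ i, q i * v i) * ∑ i, q i * w i := by
  have hvw (f : κ → ι) :
      v (f t₁) * w (f t₂) = ∏ t, (Pi.mulSingle t₁ v * Pi.mulSingle t₂ w : κ → ι → R) t (f t) := by
    rw [Fintype.prod_eq_mul t₁ t₂ ht fun t ht' => by simp [ht'.1, ht'.2]]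
    simp [ht, ht.symm]
  simp only [hvw, iidExpectation_prod]
  rw [Fintype.prod_eq_mul t₁ t₂ ht fun t ht' => by simp [ht'.1, ht'.2, hq]]
  simp [ht, ht.symm]

end CommSemiring

theorem iidExpectation_sq_sampleMean_sub {s : ℕ} (hs : s ≠ 0) {q : ι → ℝ}
    (hq : ∑ i, q i = 1) (g : ι → ℝ) :
    iidExpectation q (fun f : Fin s → ι => ((1 / s : ℝ) * ∑ t, g (f t) - ∑ i, q i * g i) ^ 2)
      = (1 / s) * (∑ i, q i * g i ^ 2 - (∑ i, q i * g i) ^ 2) := by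
  set μ := ∑ i, q i * g i
  set h : ι → ℝ := fun i => g i - μ
  have h_centered : ∑ i, q i * h i = 0 := by
    simp only [h, mul_sub, sum_sub_distrib, ← sum_mul, hq, one_mul, μ, sub_self]
  have h_sq : ∑ i, q i * h i ^ 2 = ∑ i, q i * g i ^ 2 - μ ^ 2 := by
    have (i : ι) : q i * h i ^ 2 = q i * g i ^ 2 - 2 * μ * (q i * g i) + μ ^ 2 * q i := by ring
    simp only [this, sum_add_distrib, sum_sub_distrib, ← mul_sum, hq]
    ring
  have h_mean (f : Fin s → ι) : (1 / s : ℝ) * ∑ t, g (f t) - μ = (1 / s) * ∑ t, h (f t) := by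
    simp only [h, sum_sub_distrib, sum_const, card_univ, Fintype.card_fin, nsmul_eq_mul]
    field_simp
  have h_pair (t₁ t₂ : Fin s) : iidExpectation q (fun f => h (f t₁) * h (f t₂))
      = if t₁ = t₂ then ∑ i, q i * h i ^ 2 else 0 := by
    split_ifs with ht
    · subst ht
      simp only [← sq]
      exact iidExpectation_apply hq t₁ fun i => h i ^ 2
    · rw [iidExpectation_apply_mul_apply hq ht, h_centered, zero_mul]
  simp only [h_mean, mul_pow, sq (∑ t, _), sum_mul_sum, iidExpectation_const_mul,
    iidExpectation_sum, h_pair, sum_ite_eq, mem_univ, if_true, sum_const, card_univ,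
    Fintype.card_fin, nsmul_eq_mul, h_sq]
  field_simp

end IidSampling

/-- **Variance bound for the sampled matrix-product estimator.** With `s` i.i.d. indices
drawn with probabilities `q i > 0` (`∑ q = 1`) and
`X = (1/s) ∑_t (1/q_{i_t}) A_{i_t} B^{i_t}`, the total variance (sum over all entries,
i.e. `E ‖X - AB‖_F²`) is at most `(1/s) ∑_i (1/q_i) ‖A_i‖² ‖B^i‖²`. -/
theorem sampled_matrix_product_variance (m n p : ℕ)
    (A : Matrix (Fin m) (Fin n) ℝ) (B : Matrix (Fin n) (Fin p) ℝ)
    (q : Fin n → ℝ) (hq : ∀ i, 0 < q i) (hq1 : ∑ i, q i = 1)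
    (s : ℕ) (hs : 0 < s) :
    ∑ f : Fin s → Fin n, (∏ t, q (f t)) *
        (∑ j, ∑ k,
          ((1 / (s : ℝ)) * (∑ t, (1 / q (f t)) * (A j (f t) * B (f t) k))
              - (A * B) j k) ^ 2)
      ≤ (1 / (s : ℝ)) * ∑ i, (1 / q i) * ((∑ j, A j i ^ 2) * (∑ k, B i k ^ 2)) := by
  set g : Fin m → Fin p → Fin n → ℝ := fun j k i => (1 / q i) * (A j i * B i k)
  have h_unbiased (j k) : (A * B) j k = ∑ i, q i * g j k i := by
    simp only [Matrix.mul_apply, g]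
    exact sum_congr rfl fun i _ => by field_simp [(hq i).ne']
  have h_second_moment (j k i) : q i * g j k i ^ 2 = (1 / q i) * (A j i ^ 2 * B i k ^ 2) := by
    simp only [g]
    field_simp [(hq i).ne']
  calc iidExpectation q (fun f => ∑ j, ∑ k, ((1 / s : ℝ) * ∑ t, g j k (f t) - (A * B) j k) ^ 2)
      = ∑ j, ∑ k, (1 / s) * (∑ i, q i * g j k i ^ 2 - (∑ i, q i * g j k i) ^ 2) := by
        simp only [iidExpectation_sum, h_unbiased,
          iidExpectation_sq_sampleMean_sub hs.ne' hq1]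
    _ ≤ ∑ j, ∑ k, (1 / s) * ∑ i, q i * g j k i ^ 2 := by
        gcongr
        exact sub_le_self _ (sq_nonneg _)
    _ = (1 / s) * ∑ i, (1 / q i) * ((∑ j, A j i ^ 2) * ∑ k, B i k ^ 2) := by
        simp only [h_second_moment, ← mul_sum]
        congr 1
        simp_rw [sum_mul_sum, mul_sum]
        exact (sum_congr rfl fun j _ => sum_comm).trans sum_comm
end

section
/- Let a₁,...,a_n ≥ 0 with not all zero, and consider minimizing f(p) = ∑_{i : a_i > 0} a_i²/p_i over probability vectors p (p_i ≥ 0, ∑ p_i = 1, with p_i > 0 whenever a_i > 0). The minimum is attained at p_i = a_i/∑_j a_j, and the minimum value is (∑_i a_i)². Consequently, for a matrix A, the upper bound (1/s)∑_i ‖A_i‖⁴/p_i on the variance of the sampled estimator of AAᵀ is minimized by length-squared sampling p_i ∝ ‖A_i‖². -/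
/-- **Optimality of length-squared sampling.** For `a i ≥ 0`, not all zero, the function
`p ↦ ∑_{i : a i > 0} a i² / p i` over probability vectors `p` (with `p i > 0` whenever
`a i > 0`) attains its minimum value `(∑ a)²` at `p i = a i / ∑ a`. (With `a i = ‖A_i‖²`
this says the variance bound for estimating `AAᵀ` is minimized by length-squared
sampling.) -/
theorem length_squared_sampling_optimal (n : ℕ) (a : Fin n → ℝ)
    (ha : ∀ i, 0 ≤ a i) (hne : ∃ i, 0 < a i)
    (q : Fin n → ℝ) (hq : ∀ i, q i = a i / ∑ j, a j) :
    (∀ p : Fin n → ℝ, (∀ i, 0 ≤ p i) → (∑ i, p i) = 1 → (∀ i, 0 < a i → 0 < p i) →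
      (∑ i, a i) ^ 2 ≤ ∑ i ∈ Finset.univ.filter (fun i => 0 < a i), a i ^ 2 / p i) ∧
    (∑ i ∈ Finset.univ.filter (fun i => 0 < a i), a i ^ 2 / q i) = (∑ i, a i) ^ 2 := by
  obtain ⟨i₀, hi₀⟩ := hne
  set S := Finset.univ.filter (fun i => 0 < a i) with hS
  have hi₀S : i₀ ∈ S := by simp [hS, hi₀]
  have hT0 : 0 < ∑ j, a j :=
    Finset.sum_pos' (fun i _ => ha i) ⟨i₀, Finset.mem_univ _, hi₀⟩
  have hsumS : ∑ i ∈ S, a i = ∑ j, a j := by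
    refine Finset.sum_filter_of_ne fun i _ hai => ?_
    exact lt_of_le_of_ne (ha i) (Ne.symm hai)
  constructor
  · intro p hp hp1 hpa
    have hpS : ∀ i ∈ S, 0 < p i := by
      intro i hi
      exact hpa i (by simpa [hS] using hi)
    have key := Finset.sq_sum_div_le_sum_sq_div S a hpS
    rw [hsumS] at key
    refine le_trans ?_ key
    have hpsum : ∑ i ∈ S, p i ≤ 1 := by
      rw [← hp1]
      exact Finset.sum_le_sum_of_subset_of_nonneg (Finset.subset_univ _)
        (fun i _ _ => hp i)
    have hpsum0 : 0 < ∑ i ∈ S, p i := Finset.sum_pos hpS ⟨i₀, hi₀S⟩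
    calc (∑ j, a j) ^ 2 = (∑ j, a j) ^ 2 / 1 := by ring
      _ ≤ (∑ j, a j) ^ 2 / ∑ i ∈ S, p i :=
        div_le_div_of_nonneg_left (sq_nonneg _) hpsum0 hpsum
  · have : ∀ i ∈ S, a i ^ 2 / q i = a i * ∑ j, a j := by
      intro i hi
      have hai : 0 < a i := by simpa [hS] using hi
      rw [hq i, div_div_eq_mul_div]
      field_simp
    rw [Finset.sum_congr rfl this, ← Finset.sum_mul, hsumS, sq]
end

section
/- For any m×n real matrix A there exist k rows of A whose span contains the rows of a rank-k matrix Ã with ‖A − Ã‖_F² ≤ (k+1)·‖A − A_k‖_F², where A_k is the best rank-k approximation of A in Frobenius norm. -/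
/-!
Write `A_k = L W` with `L` of full column rank `d ≤ k` and put `R = A - A_k`. For rows `f` of `A`
with `L_f` invertible, `Ã = L L_f⁻¹ A_f` has rank at most `d`, its rows lie in the span of the
rows `f` of `A`, and `A - Ã = R - L L_f⁻¹ R_f` since `L L_f⁻¹` maps `(A_k)_f` back to `A_k`.
Averaging over `f` with weights `det (L_f)²`, it suffices that
`∑_f det (L_f)² ‖R - L L_f⁻¹ R_f‖² ≤ (d + 1) ∑_f det (L_f)² ‖R‖²`.
Column by column, `det (L_f) (r - L L_f⁻¹ r_f)_i` is the minor of `[r | L]` on the rows `(i, f)`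
(a Schur complement), so by Cauchy–Binet the left side is at most
`(d + 1)! det ([r | L]ᵀ [r | L]) ≤ (d + 1)! det (Lᵀ L) ‖r‖²`, while
`∑_f det (L_f)² = d! det (Lᵀ L)`.
-/

def frobSq {m n : ℕ} (M : Matrix (Fin m) (Fin n) ℝ) : ℝ := ∑ i, ∑ j, M i j ^ 2

theorem Fintype.sum_unit_sum_arrow {ι n β : Type*} [Fintype ι] [Fintype n] [DecidableEq n]
    [AddCommMonoid β] (F : (Unit ⊕ n → ι) → β) :
    ∑ g, F g = ∑ f : n → ι, ∑ i : ι, F (Sum.elim (fun _ => i) f) := by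
  rw [Finset.sum_comm, ← Fintype.sum_prod_type']
  exact (Fintype.sum_equiv (((Equiv.funUnique Unit ι).symm.prodCongr (Equiv.refl _)).trans
    (Equiv.sumArrowEquivProdArrow _ _ _).symm) _ _ fun _ => rfl).symm

theorem exists_pos_and_le_of_sum_mul_le {α : Type*} [Fintype α] {w E : α → ℝ} {C : ℝ}
    (hw : ∀ a, 0 ≤ w a) (hpos : 0 < ∑ a, w a) (h : ∑ a, w a * E a ≤ (∑ a, w a) * C) :
    ∃ a, 0 < w a ∧ E a ≤ C := by
  by_contra! hcon
  obtain ⟨a, -, ha⟩ :=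
    Finset.exists_lt_of_sum_lt (by simpa using hpos : ∑ _a : α, (0 : ℝ) < ∑ a, w a)
  refine h.not_gt ?_
  rw [Finset.sum_mul]
  refine Finset.sum_lt_sum (fun b _ => ?_)
    ⟨a, Finset.mem_univ _, mul_lt_mul_of_pos_left (hcon a ha) ha⟩
  rcases (hw b).eq_or_lt with hb | hb
  · simp [← hb]
  · exact (mul_lt_mul_of_pos_left (hcon b hb) hb).le

namespace Matrix

section CauchyBinet

variable {ι n R : Type*} [Fintype ι] [Fintype n] [DecidableEq n] [CommRing R]

theorem det_transpose_mul_eq_sum (A B : Matrix ι n R) :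
    (Aᵀ * B).det = ∑ f : n → ι, (∏ j, B (f j) j) * (A.submatrix f id).det := by
  have hrows : (Aᵀ * B)ᵀ = of fun j => ∑ k, B k j • A k := by
    ext j p
    simp [mul_apply, mul_comm]
  rw [← det_transpose, hrows]
  have := (detRowAlternating : (n → R) [⋀^n]→ₗ[R] R).toMultilinearMap.map_sum
    (fun j k => B k j • A k)
  simp only [MultilinearMap.map_smul_univ, smul_eq_mul] at this
  exact this

-- Cauchy–Binet summed over all maps `n → ι`: non-injective maps contribute `0`, and each set of
-- rows appears once per ordering, whence the factorial.
theorem sum_det_submatrix_mul_det_submatrix (A B : Matrix ι n R) :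
    ∑ f : n → ι, (A.submatrix f id).det * (B.submatrix f id).det
      = (Fintype.card n).factorial * (Aᵀ * B).det := by
  have hσ (σ : Equiv.Perm n) :
      ∑ f : n → ι, (A.submatrix f id).det * (Equiv.Perm.sign σ * ∏ j, B (f (σ j)) j)
        = (Aᵀ * B).det := by
    rw [det_transpose_mul_eq_sum]
    refine Fintype.sum_equiv (σ.symm.arrowCongr (Equiv.refl ι)) _ _ fun f => ?_
    have hf : A.submatrix f id = (A.submatrix (f ∘ σ) id).submatrix σ.symm id := by
      ext i j
      simp
    rw [hf, det_permute, Equiv.Perm.sign_symm]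
    change _ = (∏ j, B (f (σ j)) j) * (A.submatrix (f ∘ σ) id).det
    linear_combination (∏ j, B (f (σ j)) j) * (A.submatrix (f ∘ σ) id).det *
      (by norm_cast; simp : ((Equiv.Perm.sign σ : ℤ) : R) * (Equiv.Perm.sign σ : ℤ) = 1)
  simp_rw [det_apply' (B.submatrix _ id), Finset.mul_sum]
  rw [Finset.sum_comm]
  simp only [submatrix_apply, id, hσ, Finset.sum_const, Finset.card_univ, Fintype.card_perm,
    nsmul_eq_mul]

theorem sum_det_submatrix_sq (A : Matrix ι n R) :
    ∑ f : n → ι, (A.submatrix f id).det ^ 2 = (Fintype.card n).factorial * (Aᵀ * A).det := by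
  simp only [sq, sum_det_submatrix_mul_det_submatrix]

end CauchyBinet

section SchurComplement

variable {ι n : Type*} [Fintype n] [DecidableEq n]

theorem det_submatrix_fromCols_replicateCol (L : Matrix ι n ℝ) (r : ι → ℝ) (i : ι) (f : n → ι)
    (hf : IsUnit (L.submatrix f id).det) :
    ((fromCols (replicateCol Unit r) L).submatrix (Sum.elim (fun _ : Unit => i) f) id).det
      = (L.submatrix f id).det * (r - (L * (L.submatrix f id)⁻¹) *ᵥ (r ∘ f)) i := by
  let := (L.submatrix f id).invertibleOfIsUnitDet hf
  have hblocks : (fromCols (replicateCol Unit r) L).submatrix (Sum.elim (fun _ : Unit => i) f) id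
      = fromBlocks (of fun _ _ => r i) (of fun _ => L i) (replicateCol Unit (r ∘ f))
          (L.submatrix f id) := by
    ext (_ | _) (_ | _) <;> rfl
  rw [hblocks, det_fromBlocks₂₂, det_unique (_ : Matrix Unit Unit ℝ), invOf_eq_nonsing_inv]
  rfl

variable [Fintype ι]

theorem det_transpose_mul_self_fromCols_replicateCol_le {L : Matrix ι n ℝ}
    (hL : (Lᵀ * L).PosDef) (r : ι → ℝ) :
    ((fromCols (replicateCol Unit r) L)ᵀ * fromCols (replicateCol Unit r) L).det
      ≤ (Lᵀ * L).det * (r ⬝ᵥ r) := by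
  let := hL.isUnit.invertible
  rw [transpose_fromCols, fromRows_mul_fromCols, det_fromBlocks₂₂,
    det_unique (_ : Matrix Unit Unit ℝ), invOf_eq_nonsing_inv]
  change (Lᵀ * L).det * (r ⬝ᵥ r - ((r ᵥ* L) ᵥ* (Lᵀ * L)⁻¹) ⬝ᵥ (Lᵀ *ᵥ r)) ≤ _
  have hquad := hL.inv.posSemidef.dotProduct_mulVec_nonneg (Lᵀ *ᵥ r)
  rw [star_trivial, dotProduct_mulVec] at hquad
  rw [← mulVec_transpose L r]
  nlinarith [hL.det_pos]

theorem sum_det_sq_mul_residual_le {L : Matrix ι n ℝ} (hL : (Lᵀ * L).PosDef) (r : ι → ℝ) :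
    ∑ f : n → ι, (L.submatrix f id).det ^ 2 *
        ∑ i, (r - (L * (L.submatrix f id)⁻¹) *ᵥ (r ∘ f)) i ^ 2
      ≤ (Fintype.card n + 1) * (∑ f : n → ι, (L.submatrix f id).det ^ 2) * ∑ i, r i ^ 2 := by
  set N := fromCols (replicateCol Unit r) L
  have hterm (f : n → ι) (i : ι) :
      (L.submatrix f id).det ^ 2 * (r - (L * (L.submatrix f id)⁻¹) *ᵥ (r ∘ f)) i ^ 2
        ≤ (N.submatrix (Sum.elim (fun _ : Unit => i) f) id).det ^ 2 := by
    by_cases hf : (L.submatrix f id).det = 0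
    -- `(L.submatrix f id)⁻¹` is junk here, but its weight vanishes.
    · rw [hf, zero_pow two_ne_zero, zero_mul]
      positivity
    · rw [det_submatrix_fromCols_replicateCol L r i f (isUnit_iff_ne_zero.mpr hf), mul_pow]
  calc _ = ∑ f : n → ι, ∑ i, (L.submatrix f id).det ^ 2 *
          (r - (L * (L.submatrix f id)⁻¹) *ᵥ (r ∘ f)) i ^ 2 := by
        simp only [Finset.mul_sum]
    _ ≤ ∑ f : n → ι, ∑ i, (N.submatrix (Sum.elim (fun _ : Unit => i) f) id).det ^ 2 :=
        Finset.sum_le_sum fun f _ => Finset.sum_le_sum fun i _ => hterm f i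
    _ = (Fintype.card n + 1).factorial * (Nᵀ * N).det := by
        rw [← Fintype.sum_unit_sum_arrow fun g => (N.submatrix g id).det ^ 2,
          sum_det_submatrix_sq, Fintype.card_sum, Fintype.card_unit, add_comm 1]
    _ ≤ (Fintype.card n + 1).factorial * ((Lᵀ * L).det * (r ⬝ᵥ r)) := by
        gcongr
        exact det_transpose_mul_self_fromCols_replicateCol_le hL r
    _ = _ := by
        simp only [sum_det_submatrix_sq, Nat.factorial_succ, dotProduct, ← sq]
        push_cast
        ring

end SchurComplement

section Field

variable {ι n κ K : Type*} [Fintype n] [Field K]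

theorem mul_nonsing_inv_submatrix_mul_submatrix [DecidableEq n] (L : Matrix ι n K)
    (W : Matrix n κ K) {f : n → ι} (hf : IsUnit (L.submatrix f id).det) :
    L * (L.submatrix f id)⁻¹ * (L * W).submatrix f id = L * W := by
  rw [submatrix_mul L W f id id Function.bijective_id, submatrix_id_id, Matrix.mul_assoc,
    ← Matrix.mul_assoc _ _ W, nonsing_inv_mul _ hf, Matrix.one_mul]

theorem mul_apply_mem_span_range_row (M : Matrix κ n K) (B : Matrix n ι K) (i : κ) :
    (M * B) i ∈ Submodule.span K (Set.range B.row) := by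
  rw [show (M * B) i = B.vecMulLinear (M i) from rfl, ← range_vecMulLinear]
  exact LinearMap.mem_range_self _ _

theorem exists_mul_eq_and_mulVec_injective [Fintype ι] (A : Matrix ι n K) :
    ∃ (d : ℕ) (L : Matrix ι (Fin d) K) (W : Matrix (Fin d) n K),
      d = A.rank ∧ L * W = A ∧ Function.Injective L.mulVec := by
  set V := Submodule.span K (Set.range Aᵀ)
  let b : Module.Basis (Fin A.rank) K V :=
    Module.finBasisOfFinrankEq K V (rank_eq_finrank_span_cols A).symm
  have hcol (x : n) : Aᵀ x ∈ V := Submodule.subset_span ⟨x, rfl⟩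
  refine ⟨A.rank, of fun i q => (b q : ι → K) i, of fun q x => b.repr ⟨Aᵀ x, hcol x⟩ q, rfl,
    ?_, ?_⟩
  · ext i x
    have := congrArg (fun v : V => (v : ι → K) i) (b.sum_repr ⟨Aᵀ x, hcol x⟩)
    simp only [AddSubmonoidClass.coe_finsetSum, SetLike.val_smul, Finset.sum_apply,
      Pi.smul_apply, smul_eq_mul] at this
    rw [mul_apply]
    simpa [mul_comm] using this
  · rw [mulVec_injective_iff]
    exact b.linearIndependent.map' V.subtype V.ker_subtype

end Field

end Matrix

open Matrix

theorem frobSq_nonneg {m n : ℕ} (M : Matrix (Fin m) (Fin n) ℝ) : 0 ≤ frobSq M := by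
  unfold frobSq
  positivity

section

variable {n : Type*} [Fintype n] [DecidableEq n]

theorem sum_det_sq_mul_frobSq_residual_le {m p : ℕ} {L : Matrix (Fin m) n ℝ}
    (hL : (Lᵀ * L).PosDef) (R : Matrix (Fin m) (Fin p) ℝ) :
    ∑ f : n → Fin m, (L.submatrix f id).det ^ 2 *
        frobSq (R - L * (L.submatrix f id)⁻¹ * R.submatrix f id)
      ≤ (Fintype.card n + 1) * (∑ f : n → Fin m, (L.submatrix f id).det ^ 2) * frobSq R := by
  have hcol (f : n → Fin m) (i : Fin m) (x : Fin p) :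
      (R - L * (L.submatrix f id)⁻¹ * R.submatrix f id) i x
        = (Rᵀ x - (L * (L.submatrix f id)⁻¹) *ᵥ (Rᵀ x ∘ f)) i := rfl
  calc _ = ∑ x, ∑ f : n → Fin m, (L.submatrix f id).det ^ 2 *
          ∑ i, (Rᵀ x - (L * (L.submatrix f id)⁻¹) *ᵥ (Rᵀ x ∘ f)) i ^ 2 := by
        simp only [frobSq, hcol, Finset.mul_sum]
        exact (Finset.sum_congr rfl fun f _ => Finset.sum_comm).trans Finset.sum_comm
    _ ≤ ∑ x, (Fintype.card n + 1) * (∑ f : n → Fin m, (L.submatrix f id).det ^ 2) *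
          ∑ i, Rᵀ x i ^ 2 :=
        Finset.sum_le_sum fun x _ => sum_det_sq_mul_residual_le hL (Rᵀ x)
    _ = _ := by
        rw [← Finset.mul_sum, frobSq, Finset.sum_comm]
        rfl

theorem exists_isUnit_det_frobSq_residual_le {m p : ℕ} {L : Matrix (Fin m) n ℝ}
    (hL : (Lᵀ * L).PosDef) (R : Matrix (Fin m) (Fin p) ℝ) :
    ∃ f : n → Fin m, IsUnit (L.submatrix f id).det ∧
      frobSq (R - L * (L.submatrix f id)⁻¹ * R.submatrix f id)
        ≤ (Fintype.card n + 1) * frobSq R := by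
  have hpos : 0 < ∑ f : n → Fin m, (L.submatrix f id).det ^ 2 := by
    rw [sum_det_submatrix_sq]
    exact mul_pos (by positivity) hL.det_pos
  obtain ⟨f, hf, hle⟩ := exists_pos_and_le_of_sum_mul_le (fun _ => sq_nonneg _) hpos
    (C := (Fintype.card n + 1) * frobSq R)
    ((sum_det_sq_mul_frobSq_residual_le hL R).trans_eq (by ring))
  exact ⟨f, isUnit_iff_ne_zero.mpr (sq_pos_iff.mp hf), hle⟩

end

theorem exists_k_rows_spanning_approx_general (m n k : ℕ) (hk : k ≤ m)
    (A Ak : Matrix (Fin m) (Fin n) ℝ) (hAk_rank : Ak.rank ≤ k) :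
    ∃ S : Finset (Fin m), S.card = k ∧
      ∃ At : Matrix (Fin m) (Fin n) ℝ, At.rank ≤ k ∧
        (∀ i, (fun j => At i j) ∈
          Submodule.span ℝ {v : Fin n → ℝ | ∃ i' ∈ S, v = fun j => A i' j}) ∧
        frobSq (A - At) ≤ (k + 1) * frobSq (A - Ak) := by
  obtain ⟨d, L, W, hd, hLW, hL⟩ := exists_mul_eq_and_mulVec_injective Ak
  rw [← hd] at hAk_rank
  have hgram : (Lᵀ * L).PosDef := by
    simpa [conjTranspose_eq_transpose_of_trivial] using PosDef.conjTranspose_mul_self L hL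
  obtain ⟨f, hf, hres⟩ := exists_isUnit_det_frobSq_residual_le hgram (A - Ak)
  obtain ⟨S, hfS, -, hS⟩ := Finset.exists_subsuperset_card_eq
    (Finset.subset_univ (Finset.univ.image f))
    (Finset.card_image_le.trans (by simpa using hAk_rank)) (by simpa using hk)
  have hAt : A - L * (L.submatrix f id)⁻¹ * A.submatrix f id
      = (A - Ak) - L * (L.submatrix f id)⁻¹ * (A - Ak).submatrix f id := by
    rw [submatrix_sub, Pi.sub_apply, Pi.sub_apply, Matrix.mul_sub, ← hLW,
      mul_nonsing_inv_submatrix_mul_submatrix L W hf]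
    abel
  refine ⟨S, hS, L * (L.submatrix f id)⁻¹ * A.submatrix f id, ?_, fun i => ?_, ?_⟩
  · exact (rank_mul_le_right _ _).trans ((rank_le_height _).trans hAk_rank)
  · refine Submodule.span_mono ?_ (mul_apply_mem_span_range_row _ _ i)
    rintro _ ⟨t, rfl⟩
    exact ⟨f t, hfS (Finset.mem_image_of_mem f (Finset.mem_univ t)), rfl⟩
  · rw [hAt]
    calc _ ≤ (d + 1) * frobSq (A - Ak) := by simpa using hres
      _ ≤ (k + 1) * frobSq (A - Ak) := by
        gcongr
        exact frobSq_nonneg _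

/-- **Existence of `k` spanning rows.** Any `m × n` matrix `A` (with `k ≤ m`) has `k` rows
whose span contains the rows of a rank-`k` matrix `Ã` with
`‖A - Ã‖_F² ≤ (k+1) ‖A - A_k‖_F²`, where `A_k` is a best rank-`k` approximation of `A`. -/
theorem exists_k_rows_spanning_approx (m n k : ℕ) (hk : k ≤ m)
    (A Ak : Matrix (Fin m) (Fin n) ℝ) (hAk_rank : Ak.rank ≤ k)
    (hAk_best : ∀ C : Matrix (Fin m) (Fin n) ℝ, C.rank ≤ k →
      frobSq (A - Ak) ≤ frobSq (A - C)) :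
    ∃ S : Finset (Fin m), S.card = k ∧
      ∃ At : Matrix (Fin m) (Fin n) ℝ, At.rank ≤ k ∧
        (∀ i, (fun j => At i j) ∈
          Submodule.span ℝ {v : Fin n → ℝ | ∃ i' ∈ S, v = fun j => A i' j}) ∧
        frobSq (A - At) ≤ (k + 1) * frobSq (A - Ak) :=
  exists_k_rows_spanning_approx_general m n k hk A Ak hAk_rank
end

section
/- Let A ∈ ℝ^{m×n}, let u⁽¹⁾,...,u⁽ᵏ⁾ be any orthonormal vectors in ℝ^m, and let à = ∑_{t=1}^k u⁽ᵗ⁾u⁽ᵗ⁾ᵀ A (the projection of A onto the span of the u⁽ᵗ⁾). Then ‖A − Ã‖_F² = ‖A‖_F² − ∑_{t=1}^k ‖Aᵀu⁽ᵗ⁾‖², and ‖A − Ã‖_F² is minimized over all choices of k orthonormal vectors when the u⁽ᵗ⁾ are the top k left singular vectors of A, in which case ‖A − Ã‖_F² = ∑_{t>k} σ_t(A)². -/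
open Finset

private lemma sq_sum_eq {ι : Type*} [Fintype ι] (f : ι → ℝ) :
    (∑ t, f t) ^ 2 = ∑ s, ∑ t, f s * f t := by
  rw [sq, Finset.sum_mul_sum]

private lemma complete_of_ortho {m : ℕ} (v : Fin m → Fin m → ℝ)
    (hv : ∀ s t, ∑ i, v s i * v t i = if s = t then 1 else 0) :
    ∀ i j, ∑ t, v t i * v t j = if i = j then 1 else 0 := by
  set V : Matrix (Fin m) (Fin m) ℝ := Matrix.of v with hV
  have h1 : V * V.transpose = 1 := by
    ext s t
    simpa [Matrix.mul_apply, V, Matrix.one_apply] using hv s t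
  have h2 : V.transpose * V = 1 := mul_eq_one_comm.mp h1
  intro i j
  have := congrFun (congrFun h2 i) j
  simpa [Matrix.mul_apply, V, Matrix.one_apply] using this

private lemma parseval {m : ℕ} (v : Fin m → Fin m → ℝ)
    (hv : ∀ s t, ∑ i, v s i * v t i = if s = t then 1 else 0) (x : Fin m → ℝ) :
    ∑ t, (∑ i, v t i * x i) ^ 2 = ∑ i, x i ^ 2 := by
  have hc := complete_of_ortho v hv
  calc ∑ t, (∑ i, v t i * x i) ^ 2
      = ∑ t, ∑ i, ∑ i', (v t i * x i) * (v t i' * x i') := by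
        simp_rw [sq_sum_eq]
    _ = ∑ i, ∑ i', (x i * x i') * ∑ t, v t i * v t i' := by
        rw [Finset.sum_comm]
        refine Finset.sum_congr rfl fun i _ => ?_
        rw [Finset.sum_comm]
        refine Finset.sum_congr rfl fun i' _ => ?_
        rw [Finset.mul_sum]
        exact Finset.sum_congr rfl fun t _ => by ring
    _ = ∑ i, x i ^ 2 := by
        simp only [hc, mul_ite, mul_one, mul_zero]
        simp [Finset.sum_ite_eq, sq]

private lemma proj_identity {m n k : ℕ} (A : Matrix (Fin m) (Fin n) ℝ)
    (u : Fin k → Fin m → ℝ)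
    (hu : ∀ s t, ∑ i, u s i * u t i = if s = t then 1 else 0) :
    (∑ i, ∑ j, (A i j - ∑ t, u t i * ∑ i', u t i' * A i' j) ^ 2)
      = (∑ i, ∑ j, A i j ^ 2) - ∑ t, ∑ j, (∑ i, u t i * A i j) ^ 2 := by
  have cross : ∀ j, ∑ i, A i j * (∑ t, u t i * ∑ i', u t i' * A i' j)
      = ∑ t, (∑ i, u t i * A i j) ^ 2 := by
    intro j
    simp_rw [Finset.mul_sum]
    rw [Finset.sum_comm]
    refine Finset.sum_congr rfl fun t _ => ?_
    rw [sq]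
    calc ∑ x, ∑ i, A x j * (u t x * (u t i * A i j))
        = ∑ x, ∑ i, (u t x * A x j) * (u t i * A i j) :=
          Finset.sum_congr rfl fun x _ => Finset.sum_congr rfl fun i _ => by ring
      _ = (∑ i, u t i * A i j) * ∑ i, u t i * A i j := by rw [← Finset.sum_mul_sum]
  have sqr : ∀ j, ∑ i, (∑ t, u t i * ∑ i', u t i' * A i' j) ^ 2
      = ∑ t, (∑ i, u t i * A i j) ^ 2 := by
    intro j
    calc ∑ i, (∑ t, u t i * ∑ i', u t i' * A i' j) ^ 2
        = ∑ i, ∑ s, ∑ t, (u s i * ∑ i', u s i' * A i' j)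
            * (u t i * ∑ i', u t i' * A i' j) := by simp_rw [sq_sum_eq]
      _ = ∑ s, ∑ t, ((∑ i', u s i' * A i' j) * (∑ i', u t i' * A i' j))
            * ∑ i, u s i * u t i := by
          rw [Finset.sum_comm]
          refine Finset.sum_congr rfl fun s _ => ?_
          rw [Finset.sum_comm]
          refine Finset.sum_congr rfl fun t _ => ?_
          rw [Finset.mul_sum]
          exact Finset.sum_congr rfl fun i _ => by ring
      _ = ∑ t, (∑ i, u t i * A i j) ^ 2 := by
          simp only [hu, mul_ite, mul_one, mul_zero]
          simp [Finset.sum_ite_eq, sq]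
  have expand : ∀ i j, (A i j - ∑ t, u t i * ∑ i', u t i' * A i' j) ^ 2
      = A i j ^ 2 - 2 * (A i j * (∑ t, u t i * ∑ i', u t i' * A i' j))
        + (∑ t, u t i * ∑ i', u t i' * A i' j) ^ 2 := fun i j => by ring
  have perj : ∀ j, ∑ i, (A i j - ∑ t, u t i * ∑ i', u t i' * A i' j) ^ 2
      = ∑ i, A i j ^ 2 - ∑ t, (∑ i, u t i * A i j) ^ 2 := by
    intro j
    simp_rw [expand]
    rw [Finset.sum_add_distrib, Finset.sum_sub_distrib, ← Finset.mul_sum, cross j, sqr j]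
    ring
  rw [Finset.sum_comm]
  simp_rw [perj]
  rw [Finset.sum_sub_distrib]
  congr 1
  · exact Finset.sum_comm
  · exact Finset.sum_comm

private lemma eig_dot {m n : ℕ} (A : Matrix (Fin m) (Fin n) ℝ) (w w' : Fin m → ℝ) (μ' : ℝ)
    (heig : (A * A.transpose).mulVec w' = μ' • w') :
    ∑ j, (∑ i, w i * A i j) * (∑ i, w' i * A i j) = μ' * ∑ i, w i * w' i := by
  calc ∑ j, (∑ i, w i * A i j) * (∑ i, w' i * A i j)
      = ∑ j, ∑ i, ∑ i', (w i * A i j) * (w' i' * A i' j) := by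
        simp_rw [Finset.sum_mul_sum]
    _ = ∑ i, w i * ∑ i', (∑ j, A i j * A i' j) * w' i' := by
        rw [Finset.sum_comm]
        refine sum_congr rfl fun i _ => ?_
        rw [Finset.mul_sum, Finset.sum_comm]
        refine sum_congr rfl fun i' _ => ?_
        rw [Finset.sum_mul, Finset.mul_sum]
        exact sum_congr rfl fun j _ => by ring
    _ = ∑ i, w i * ((A * A.transpose).mulVec w') i := by
        refine sum_congr rfl fun i _ => ?_
        simp [Matrix.mulVec, dotProduct, Matrix.mul_apply]
    _ = μ' * ∑ i, w i * w' i := by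
        rw [heig]
        simp_rw [Pi.smul_apply, smul_eq_mul, Finset.mul_sum]
        exact sum_congr rfl fun i _ => by ring

private lemma bessel {m k : ℕ} (u : Fin k → Fin m → ℝ)
    (hu : ∀ s t, ∑ i, u s i * u t i = if s = t then 1 else 0)
    (x : Fin m → ℝ) (hx : ∑ i, x i * x i = 1) :
    ∑ s, (∑ i, u s i * x i) ^ 2 ≤ 1 := by
  set c : Fin k → ℝ := fun s => ∑ i, u s i * x i with hc
  have h0 : 0 ≤ ∑ i, (x i - ∑ s, c s * u s i) ^ 2 :=
    Finset.sum_nonneg fun i _ => sq_nonneg _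
  have e1 : ∑ i, x i * (∑ s, c s * u s i) = ∑ s, c s ^ 2 := by
    simp_rw [Finset.mul_sum]
    rw [Finset.sum_comm]
    refine sum_congr rfl fun s _ => ?_
    calc ∑ i, x i * (c s * u s i) = ∑ i, c s * (u s i * x i) :=
          sum_congr rfl fun i _ => by ring
      _ = c s * ∑ i, u s i * x i := by rw [Finset.mul_sum]
      _ = c s * c s := rfl
      _ = c s ^ 2 := (sq (c s)).symm
  have e2 : ∑ i, (∑ s, c s * u s i) ^ 2 = ∑ s, c s ^ 2 := by
    calc ∑ i, (∑ s, c s * u s i) ^ 2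
        = ∑ i, ∑ s, ∑ s', (c s * u s i) * (c s' * u s' i) := by simp_rw [sq_sum_eq]
      _ = ∑ s, ∑ s', (c s * c s') * ∑ i, u s i * u s' i := by
          rw [Finset.sum_comm]
          refine sum_congr rfl fun s _ => ?_
          rw [Finset.sum_comm]
          refine sum_congr rfl fun s' _ => ?_
          rw [Finset.mul_sum]
          exact sum_congr rfl fun i _ => by ring
      _ = ∑ s, c s ^ 2 := by
          simp only [hu, mul_ite, mul_one, mul_zero]
          simp [Finset.sum_ite_eq, sq]
  have hexp : ∑ i, (x i - ∑ s, c s * u s i) ^ 2 = 1 - ∑ s, c s ^ 2 := by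
    have : ∀ i, (x i - ∑ s, c s * u s i) ^ 2
        = x i * x i - 2 * (x i * (∑ s, c s * u s i)) + (∑ s, c s * u s i) ^ 2 :=
      fun i => by ring
    simp_rw [this]
    rw [Finset.sum_add_distrib, Finset.sum_sub_distrib, ← Finset.mul_sum, e1, e2, hx]
    ring
  rw [hexp] at h0
  linarith

private lemma comb {m k : ℕ} (hk : k ≤ m) (μ w : Fin m → ℝ)
    (hmono : ∀ s t : Fin m, s ≤ t → μ t ≤ μ s) (hμ0 : ∀ t, 0 ≤ μ t)
    (hw0 : ∀ t, 0 ≤ w t) (hw1 : ∀ t, w t ≤ 1)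
    (hsum : ∑ t, w t = (k : ℝ))
    (hcard : (Finset.univ.filter (fun t : Fin m => (t : ℕ) < k)).card = k) :
    ∑ t, μ t * w t ≤ ∑ t ∈ Finset.univ.filter (fun t : Fin m => (t : ℕ) < k), μ t := by
  classical
  set μstar : ℝ := if h : k < m then μ ⟨k, h⟩ else 0 with hμs
  have h1 : ∀ t : Fin m, (t : ℕ) < k → μstar ≤ μ t := by
    intro t ht
    rw [hμs]
    split_ifs with h
    · exact hmono t ⟨k, h⟩ (by simpa [Fin.le_def] using ht.le)
    · exact hμ0 t
  have h2 : ∀ t : Fin m, ¬ (t : ℕ) < k → μ t ≤ μstar := by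
    intro t ht
    push_neg at ht
    have hkm : k < m := lt_of_le_of_lt ht t.isLt
    rw [hμs, dif_pos hkm]
    exact hmono ⟨k, hkm⟩ t (by simpa [Fin.le_def] using ht)
  calc ∑ t, μ t * w t
      = ∑ t ∈ Finset.univ.filter (fun t : Fin m => (t : ℕ) < k), μ t * w t
        + ∑ t ∈ Finset.univ.filter (fun t : Fin m => ¬ (t : ℕ) < k), μ t * w t :=
        (Finset.sum_filter_add_sum_filter_not _ _ _).symm
    _ ≤ ∑ t ∈ Finset.univ.filter (fun t : Fin m => (t : ℕ) < k), (μ t + μstar * (w t - 1))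
        + ∑ t ∈ Finset.univ.filter (fun t : Fin m => ¬ (t : ℕ) < k), μstar * w t := by
        refine add_le_add (Finset.sum_le_sum fun t ht => ?_) (Finset.sum_le_sum fun t ht => ?_)
        · have ht' : (t : ℕ) < k := (Finset.mem_filter.mp ht).2
          have := mul_le_mul_of_nonpos_right (h1 t ht') (by linarith [hw1 t] : w t - 1 ≤ 0)
          nlinarith
        · exact mul_le_mul_of_nonneg_right (h2 t (Finset.mem_filter.mp ht).2) (hw0 t)
    _ = ∑ t ∈ Finset.univ.filter (fun t : Fin m => (t : ℕ) < k), μ t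
        + μstar * ((∑ t ∈ Finset.univ.filter (fun t : Fin m => (t : ℕ) < k), w t
          + ∑ t ∈ Finset.univ.filter (fun t : Fin m => ¬ (t : ℕ) < k), w t)
          - (Finset.univ.filter (fun t : Fin m => (t : ℕ) < k)).card) := by
        rw [Finset.sum_add_distrib]
        simp_rw [mul_sub, mul_one]
        rw [Finset.sum_sub_distrib, Finset.sum_const, ← Finset.mul_sum, ← Finset.mul_sum,
          nsmul_eq_mul]
        ring
    _ = ∑ t ∈ Finset.univ.filter (fun t : Fin m => (t : ℕ) < k), μ t := by
        rw [Finset.sum_filter_add_sum_filter_not, hsum, hcard]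
        ring
private lemma expand_in_basis {m n : ℕ} (A : Matrix (Fin m) (Fin n) ℝ)
    (v : Fin m → Fin m → ℝ) (μ : Fin m → ℝ)
    (hv : ∀ s t, ∑ i, v s i * v t i = if s = t then 1 else 0)
    (hdot : ∀ t t', ∑ j, (∑ i, v t i * A i j) * (∑ i, v t' i * A i j)
        = if t = t' then μ t else 0)
    (x : Fin m → ℝ) :
    ∑ j, (∑ i, x i * A i j) ^ 2 = ∑ t, μ t * (∑ i, x i * v t i) ^ 2 := by
  have hc := complete_of_ortho v hv
  have hrep : ∀ i, x i = ∑ t, (∑ i', x i' * v t i') * v t i := by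
    intro i
    calc x i = ∑ i', x i' * (if i' = i then 1 else 0) := by simp
      _ = ∑ i', x i' * ∑ t, v t i' * v t i := by simp_rw [hc]
      _ = ∑ t, (∑ i', x i' * v t i') * v t i := by
          simp_rw [Finset.mul_sum, Finset.sum_mul]
          rw [Finset.sum_comm]
          exact sum_congr rfl fun t _ => sum_congr rfl fun i' _ => by ring
  have hx : ∀ j, ∑ i, x i * A i j
      = ∑ t, (∑ i', x i' * v t i') * (∑ i, v t i * A i j) := by
    intro j
    calc ∑ i, x i * A i j
        = ∑ i, (∑ t, (∑ i', x i' * v t i') * v t i) * A i j :=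
          sum_congr rfl fun i _ => by rw [← hrep i]
      _ = ∑ t, (∑ i', x i' * v t i') * (∑ i, v t i * A i j) := by
          simp_rw [Finset.sum_mul]
          rw [Finset.sum_comm]
          refine sum_congr rfl fun t _ => ?_
          rw [Finset.sum_comm]
          refine sum_congr rfl fun i _ => ?_
          simp only [mul_assoc, Finset.mul_sum]
  calc ∑ j, (∑ i, x i * A i j) ^ 2
      = ∑ j, ∑ t, ∑ t', ((∑ i', x i' * v t i') * (∑ i, v t i * A i j))
          * ((∑ i', x i' * v t' i') * (∑ i, v t' i * A i j)) := by
        refine sum_congr rfl fun j _ => ?_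
        rw [hx j, sq_sum_eq]
    _ = ∑ t, ∑ t', ((∑ i', x i' * v t i') * (∑ i', x i' * v t' i'))
          * ∑ j, (∑ i, v t i * A i j) * (∑ i, v t' i * A i j) := by
        rw [Finset.sum_comm]
        refine sum_congr rfl fun t _ => ?_
        rw [Finset.sum_comm]
        refine sum_congr rfl fun t' _ => ?_
        rw [Finset.mul_sum]
        exact sum_congr rfl fun j _ => by ring
    _ = ∑ t, μ t * (∑ i, x i * v t i) ^ 2 := by
        simp only [hdot, mul_ite, mul_zero]
        rw [Finset.sum_congr rfl fun t _ => Finset.sum_ite_eq (Finset.univ) t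
          (fun t' => (∑ i', x i' * v t i') * (∑ i', x i' * v t' i') * μ t)]
        simp only [Finset.mem_univ, if_true]
        exact sum_congr rfl fun t _ => by rw [sq]; ring



/-- **Projection identity and optimality of singular-vector projection.**
For orthonormal `u⁽¹⁾,…,u⁽ᵏ⁾` and `Ã = ∑_t u⁽ᵗ⁾u⁽ᵗ⁾ᵀA`:
`‖A - Ã‖_F² = ‖A‖_F² - ∑_t ‖Aᵀu⁽ᵗ⁾‖²`; moreover, if `v` is an orthonormal eigenbasis of
`AAᵀ` with eigenvalues `μ` in nonincreasing order (so `μ t = σ_t(A)²`), then projecting onto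
the first `k` of the `v`'s (the top `k` left singular vectors) gives error exactly
`∑_{t > k} σ_t(A)²`, which is at most the error of any orthonormal family `u`. -/
theorem projection_error_and_svd_optimality (m n k : ℕ) (hk : k ≤ m)
    (A : Matrix (Fin m) (Fin n) ℝ)
    (u : Fin k → Fin m → ℝ)
    (hu : ∀ s t, ∑ i, u s i * u t i = if s = t then 1 else 0) :
    (∑ i, ∑ j, (A i j - ∑ t, u t i * ∑ i', u t i' * A i' j) ^ 2)
        = (∑ i, ∑ j, A i j ^ 2) - ∑ t, ∑ j, (∑ i, u t i * A i j) ^ 2 ∧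
    ∀ (v : Fin m → Fin m → ℝ) (μ : Fin m → ℝ),
      (∀ s t, ∑ i, v s i * v t i = if s = t then 1 else 0) →
      (∀ t, (A * A.transpose).mulVec (v t) = μ t • v t) →
      (∀ s t : Fin m, s ≤ t → μ t ≤ μ s) →
      ((∑ i, ∑ j, (A i j
            - ∑ t : Fin k, v (Fin.castLE hk t) i * ∑ i', v (Fin.castLE hk t) i' * A i' j) ^ 2)
          = ∑ t ∈ Finset.univ.filter (fun t : Fin m => k ≤ (t : ℕ)), μ t ∧
        (∑ i, ∑ j, (A i j
            - ∑ t : Fin k, v (Fin.castLE hk t) i * ∑ i', v (Fin.castLE hk t) i' * A i' j) ^ 2)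
          ≤ ∑ i, ∑ j, (A i j - ∑ t, u t i * ∑ i', u t i' * A i' j) ^ 2) := by
  classical
  refine ⟨proj_identity A u hu, ?_⟩
  intro v μ hv heig hmono
  -- pairwise inner products of the Aᵀvₜ
  have hdot : ∀ t t', ∑ j, (∑ i, v t i * A i j) * (∑ i, v t' i * A i j)
      = if t = t' then μ t else 0 := by
    intro t t'
    rw [eig_dot A (v t) (v t') (μ t') (heig t'), hv t t']
    split_ifs with h
    · rw [h, mul_one]
    · rw [mul_zero]
  have hμ : ∀ t, ∑ j, (∑ i, v t i * A i j) ^ 2 = μ t := by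
    intro t
    have := hdot t t
    simpa [sq] using this
  have hμ0 : ∀ t, 0 ≤ μ t := fun t => (hμ t) ▸ Finset.sum_nonneg fun j _ => sq_nonneg _
  -- restricted family is orthonormal
  have hv' : ∀ s t : Fin k, ∑ i, v (Fin.castLE hk s) i * v (Fin.castLE hk t) i
      = if s = t then 1 else 0 := by
    intro s t
    rw [hv]
    by_cases h : s = t
    · simp [h]
    · rw [if_neg h, if_neg fun hc => h (by exact Fin.castLE_injective hk hc)]
  have hid : (∑ i, ∑ j, (A i j
        - ∑ t : Fin k, v (Fin.castLE hk t) i * ∑ i', v (Fin.castLE hk t) i' * A i' j) ^ 2)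
      = (∑ i, ∑ j, A i j ^ 2)
        - ∑ t : Fin k, ∑ j, (∑ i, v (Fin.castLE hk t) i * A i j) ^ 2 :=
    proj_identity A (fun t => v (Fin.castLE hk t)) hv'
  -- sum over Fin k of f ∘ castLE = sum over filter (< k)
  have hmap : Finset.univ.filter (fun t : Fin m => (t : ℕ) < k)
      = Finset.map (Fin.castLEEmb hk) Finset.univ := by
    ext t
    simp only [Finset.mem_filter, Finset.mem_univ, true_and, Finset.mem_map,
      Fin.castLEEmb_apply]
    constructor
    · intro ht; exact ⟨⟨(t : ℕ), ht⟩, Fin.ext rfl⟩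
    · rintro ⟨s, rfl⟩; exact s.isLt
  have hsum_cast : ∀ (f : Fin m → ℝ), ∑ t : Fin k, f (Fin.castLE hk t)
      = ∑ t ∈ Finset.univ.filter (fun t : Fin m => (t : ℕ) < k), f t := by
    intro f
    rw [hmap, Finset.sum_map]
    rfl
  have hcard : (Finset.univ.filter (fun t : Fin m => (t : ℕ) < k)).card = k := by
    rw [hmap, Finset.card_map, Finset.card_univ, Fintype.card_fin]
  have traceA : ∑ t, μ t = ∑ i, ∑ j, A i j ^ 2 := by
    calc ∑ t, μ t = ∑ t, ∑ j, (∑ i, v t i * A i j) ^ 2 := by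
          exact (Finset.sum_congr rfl fun t _ => hμ t).symm
      _ = ∑ j, ∑ t, (∑ i, v t i * A i j) ^ 2 := Finset.sum_comm
      _ = ∑ j, ∑ i, A i j ^ 2 :=
          Finset.sum_congr rfl fun j _ => parseval v hv (fun i => A i j)
      _ = ∑ i, ∑ j, A i j ^ 2 := Finset.sum_comm
  have hfilter_not : Finset.univ.filter (fun t : Fin m => k ≤ (t : ℕ))
      = Finset.univ.filter (fun t : Fin m => ¬ (t : ℕ) < k) := by
    apply Finset.filter_congr
    intro t _
    simp [not_lt]
  have hveq : (∑ i, ∑ j, (A i j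
        - ∑ t : Fin k, v (Fin.castLE hk t) i * ∑ i', v (Fin.castLE hk t) i' * A i' j) ^ 2)
      = ∑ t ∈ Finset.univ.filter (fun t : Fin m => k ≤ (t : ℕ)), μ t := by
    rw [hid]
    have h1 : ∑ t : Fin k, ∑ j, (∑ i, v (Fin.castLE hk t) i * A i j) ^ 2
        = ∑ t ∈ Finset.univ.filter (fun t : Fin m => (t : ℕ) < k), μ t := by
      rw [← hsum_cast μ]
      exact Finset.sum_congr rfl fun t _ => hμ _
    rw [h1, ← traceA, hfilter_not,
      ← Finset.sum_filter_add_sum_filter_not Finset.univ (fun t : Fin m => (t : ℕ) < k) μ]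
    ring
  refine ⟨hveq, ?_⟩
  rw [hveq, proj_identity A u hu]
  -- it remains to bound ∑ₛ ‖Aᵀuₛ‖² by ∑_{t<k} μ t
  have hexp : ∀ s, ∑ j, (∑ i, u s i * A i j) ^ 2
      = ∑ t, μ t * (∑ i, u s i * v t i) ^ 2 := fun s =>
    expand_in_basis A v μ hv hdot (u s)
  have hkey : ∑ s, ∑ j, (∑ i, u s i * A i j) ^ 2
      ≤ ∑ t ∈ Finset.univ.filter (fun t : Fin m => (t : ℕ) < k), μ t := by
    have step1 : ∑ s, ∑ j, (∑ i, u s i * A i j) ^ 2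
        = ∑ t, μ t * ∑ s, (∑ i, u s i * v t i) ^ 2 := by
      calc ∑ s, ∑ j, (∑ i, u s i * A i j) ^ 2
          = ∑ s, ∑ t, μ t * (∑ i, u s i * v t i) ^ 2 :=
            Finset.sum_congr rfl fun s _ => hexp s
        _ = ∑ t, ∑ s, μ t * (∑ i, u s i * v t i) ^ 2 := Finset.sum_comm
        _ = ∑ t, μ t * ∑ s, (∑ i, u s i * v t i) ^ 2 :=
            Finset.sum_congr rfl fun t _ => by rw [Finset.mul_sum]
    rw [step1]
    refine comb hk μ (fun t => ∑ s, (∑ i, u s i * v t i) ^ 2) hmono hμ0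
      (fun t => Finset.sum_nonneg fun s _ => sq_nonneg _)
      (fun t => bessel u hu (v t) (by simpa using hv t t)) ?_ hcard
    -- total weight is k
    calc ∑ t, ∑ s, (∑ i, u s i * v t i) ^ 2
        = ∑ s, ∑ t, (∑ i, u s i * v t i) ^ 2 := Finset.sum_comm
      _ = ∑ s : Fin k, (1 : ℝ) := by
          refine Finset.sum_congr rfl fun s _ => ?_
          have := parseval v hv (u s)
          calc ∑ t, (∑ i, u s i * v t i) ^ 2
              = ∑ t, (∑ i, v t i * u s i) ^ 2 := by
                refine Finset.sum_congr rfl fun t _ => ?_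
                congr 1
                exact Finset.sum_congr rfl fun i _ => mul_comm _ _
            _ = ∑ i, u s i ^ 2 := parseval v hv (u s)
            _ = 1 := by
                have := hu s s
                simp only [if_pos rfl] at this
                simpa [sq] using this
      _ = (k : ℝ) := by simp
  -- conclude
  have : ∑ t ∈ Finset.univ.filter (fun t : Fin m => k ≤ (t : ℕ)), μ t
      = (∑ i, ∑ j, A i j ^ 2)
        - ∑ t ∈ Finset.univ.filter (fun t : Fin m => (t : ℕ) < k), μ t := by
    rw [hfilter_not, ← traceA,
      ← Finset.sum_filter_add_sum_filter_not Finset.univ (fun t : Fin m => (t : ℕ) < k) μ]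
    ring
  rw [this]
  have := hkey
  linarith
end
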